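/- arXiv:1412.3323 — 7 statements merged into one kernel-verified Lean document; each statement's English description precedes it below -/
import Mathlib

section
/- For every natural number n, the dimension over ℚ of the vector space of homogeneous polynomials p(v,w) of degree n in two variables over ℚ satisfying the two functional equations p(v,w) = -p(v+w, -w) and p(v,w) = -p(w,v) equals 0 if n is odd, and equals ⌊n/6⌋ if n is even. -/
/-!
The substitutions `T : p(v,w) ↦ p(v+w,-w)` and `S : p(v,w) ↦ p(w,v)` satisfy `(ST)³ = -1`, so a form
of odd degree with `Tp = Sp = -p` satisfies `p = (ST)³p = -p`. In general such a form is divisible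
by each of the six linear forms negated by a reflection of the group `⟨S, T⟩`, hence by their
product `J` of degree 6, and `p ↦ p / J` identifies these forms of degree `m + 6` with the invariant
forms of degree `m`. For invariants of even degree `m`, `q ↦ q(1,0)` is a nonzero functional (it is
`1` on `(v² + vw + w²)^(m/2)`) whose kernel is `f6 · (invariants of degree m - 6)`, where
`f6 = (vw(v+w))²`: if `q(1,0) = 0` then `w ∣ q`, invariance under `T` upgrades this to `w² ∣ q`, and
`S`, `T` move `w²` to `v²` and `(v+w)²`. So the invariants of degree `m` have dimension `⌊m/6⌋ + 1`.
-/

open MvPolynomial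

/-- The substitution endomorphism `p(v,w) ↦ p(v+w, -w)`. -/
noncomputable def substT : MvPolynomial (Fin 2) ℚ →ₗ[ℚ] MvPolynomial (Fin 2) ℚ :=
  (aeval ![X 0 + X 1, -X 1]).toLinearMap

/-- The substitution endomorphism `p(v,w) ↦ p(w, v)`. -/
noncomputable def substS : MvPolynomial (Fin 2) ℚ →ₗ[ℚ] MvPolynomial (Fin 2) ℚ :=
  (aeval ![X 1, X 0]).toLinearMap

namespace MvPolynomial

variable {R S σ : Type*}

theorem IsHomogeneous.aeval_smul [CommSemiring R] [CommSemiring S] [Algebra R S]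
    {p : MvPolynomial σ R} {n : ℕ} (hp : p.IsHomogeneous n) (s : S) (x : σ → S) :
    MvPolynomial.aeval (s • x) p = s ^ n * MvPolynomial.aeval x p := by
  conv_lhs => rw [p.as_sum]
  conv_rhs => rw [p.as_sum]
  simp only [map_sum, Finset.mul_sum, aeval_monomial]
  refine Finset.sum_congr rfl fun d hd => ?_
  have hd : d.degree = n := by
    rw [Finsupp.degree_eq_weight_one]; exact hp (mem_support_iff.mp hd)
  rw [← hd, Finsupp.degree_apply]
  simp only [Pi.smul_apply, smul_eq_mul, mul_pow, Finsupp.prod, Finset.prod_mul_distrib,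
    Finset.prod_pow_eq_pow_sum]
  ring

theorem dvd_algHom_sub_self [CommRing R] (φ : MvPolynomial σ R →ₐ[R] MvPolynomial σ R)
    {l : MvPolynomial σ R} (h : ∀ i, l ∣ φ (X i) - X i) (p : MvPolynomial σ R) :
    l ∣ φ p - p := by
  have hφ : (Ideal.Quotient.mkₐ R (Ideal.span {l})).comp φ = Ideal.Quotient.mkₐ R _ := by
    ext i
    simpa [Ideal.Quotient.mk_eq_mk_iff_sub_mem, Ideal.mem_span_singleton] using h i
  simpa [Ideal.Quotient.mk_eq_mk_iff_sub_mem, Ideal.mem_span_singleton] using congr($hφ p)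

theorem dvd_of_algHom_eq_neg [CommRing R] (h2 : IsUnit (2 : R))
    (φ : MvPolynomial σ R →ₐ[R] MvPolynomial σ R)
    {l : MvPolynomial σ R} (h : ∀ i, l ∣ φ (X i) - X i) {p : MvPolynomial σ R}
    (hp : φ p = -p) : l ∣ p := by
  have := dvd_algHom_sub_self φ h p
  rw [hp, ← neg_add', dvd_neg, ← two_mul] at this
  exact ((h2.map C).dvd_mul_left).1 this

theorem IsHomogeneous.eq_zero_of_dvd [CommRing R] [IsDomain R] {p l : MvPolynomial σ R} {n : ℕ}
    (hp : p.IsHomogeneous n) (hl : l ∣ p) (hn : n < l.totalDegree) : p = 0 := by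
  by_contra hp0
  obtain ⟨g, rfl⟩ := hl
  have := hp.totalDegree hp0
  rw [totalDegree_mul_of_isDomain (left_ne_zero_of_mul hp0) (right_ne_zero_of_mul hp0)] at this
  omega

theorem homogeneousComponent_mul_of_isHomogeneous_left [CommSemiring R] {l g : MvPolynomial σ R}
    {k : ℕ} (hl : l.IsHomogeneous k) (i : ℕ) :
    homogeneousComponent (k + i) (l * g) = l * homogeneousComponent i g := by
  classical
  let _ := gradedAlgebra (σ := σ) (R := R)
  have :=
    DirectSum.coe_decompose_mul_add_of_left_mem (homogeneousSubmodule σ R) (b := g) (j := i) hl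
  simpa [← decomposition.decompose'_apply] using this

theorem IsHomogeneous.of_mul_left [CommRing R] [IsDomain R] {l g : MvPolynomial σ R} {k m : ℕ}
    (hl : l.IsHomogeneous k) (hl0 : l ≠ 0) (h : (l * g).IsHomogeneous (k + m)) :
    g.IsHomogeneous m := by
  intro d hd
  rw [Pi.one_def, ← Finsupp.degree_eq_weight_one]
  by_contra hdm
  have hc : homogeneousComponent d.degree g ≠ 0 := fun h0 => hd <| by
    simpa [coeff_homogeneousComponent] using congr(coeff d $h0)
  apply mul_ne_zero hl0 hc
  rw [← homogeneousComponent_mul_of_isHomogeneous_left hl, homogeneousComponent_of_mem h,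
    if_neg (by omega)]

theorem X_one_dvd_of_eval_eq_zero [CommRing R] {q : MvPolynomial (Fin 2) R} {m : ℕ}
    (hq : q.IsHomogeneous m) (h : eval ![1, 0] q = 0) : X 1 ∣ q := by
  have hsub := dvd_algHom_sub_self (aeval ![(X 0 : MvPolynomial (Fin 2) R), 0]) (l := X 1)
    (fun i => by fin_cases i <;> simp) q
  have hline : ![(X 0 : MvPolynomial (Fin 2) R), 0] =
      (X 0 : MvPolynomial (Fin 2) R) • (algebraMap R (MvPolynomial (Fin 2) R) ∘ ![1, 0]) := by
    funext i; fin_cases i <;> simp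
  rw [hline, hq.aeval_smul, aeval_algebraMap_apply, aeval_eq_eval, h, map_zero, mul_zero,
    zero_sub, dvd_neg] at hsub
  exact hsub

end MvPolynomial

section LinearForms

variable {K : Type*} [Field K]

noncomputable def linForm (c : K × K) : MvPolynomial (Fin 2) K := C c.1 * X 0 + C c.2 * X 1

theorem isHomogeneous_linForm (c : K × K) : (linForm c).IsHomogeneous 1 :=
  (isHomogeneous_C_mul_X _ _).add (isHomogeneous_C_mul_X _ _)

theorem coeff_linForm (c : K × K) :
    coeff (Finsupp.single 0 1) (linForm c) = c.1 ∧
      coeff (Finsupp.single 1 1) (linForm c) = c.2 := by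
  simp [linForm, coeff_X, Finsupp.single_left_inj]

theorem irreducible_linForm {c : K × K} (hc : c ≠ 0) : Irreducible (linForm c) := by
  obtain ⟨h0, h1⟩ := coeff_linForm c
  have hne : linForm c ≠ 0 := by
    rintro h
    rw [h, coeff_zero] at h0 h1
    exact hc (Prod.ext h0.symm h1.symm)
  refine irreducible_of_totalDegree_eq_one ((isHomogeneous_linForm c).totalDegree hne)
    fun x hx => ?_
  rcases c with ⟨a, b⟩
  by_cases ha : a = 0
  · have hb : b ≠ 0 := by rintro rfl; exact hc (by simp [ha])
    exact isUnit_of_dvd_unit (by simpa [h1] using hx (Finsupp.single 1 1)) hb.isUnit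
  · exact isUnit_of_dvd_unit (by simpa [h0] using hx (Finsupp.single 0 1)) (Ne.isUnit ha)

theorem linForm_dvd_linForm {c d : K × K} (h : linForm c ∣ linForm d) :
    c.1 * d.2 = d.1 * c.2 := by
  have := map_dvd (eval ![c.2, -c.1]) h
  simp only [linForm, map_add, map_mul, eval_C, eval_X, Matrix.cons_val_zero,
    Matrix.cons_val_one, Matrix.cons_val_fin_one] at this
  rw [show c.1 * c.2 + c.2 * -c.1 = 0 by ring, zero_dvd_iff] at this
  linear_combination -this

theorem isRelPrime_linForm {c d : K × K} (h : c.1 * d.2 ≠ d.1 * c.2) :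
    IsRelPrime (linForm c) (linForm d) :=
  (irreducible_linForm (by rintro rfl; simp at h)).isRelPrime_iff_not_dvd.2
    fun hd => h (linForm_dvd_linForm hd)

theorem prod_linForm_pow_dvd {ι : Type*} [Fintype ι] {c : ι → K × K}
    (hc : Pairwise fun i j => (c i).1 * (c j).2 ≠ (c j).1 * (c i).2) (n : ι → ℕ)
    {p : MvPolynomial (Fin 2) K} (h : ∀ i, linForm (c i) ^ n i ∣ p) :
    ∏ i, linForm (c i) ^ n i ∣ p :=
  Fintype.prod_dvd_of_isRelPrime (fun _ _ hij => (isRelPrime_linForm (hc hij)).pow) h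

end LinearForms

namespace Submodule

theorem finrank_inf_ker_add_one {K V : Type*} [Field K] [AddCommGroup V] [Module K V]
    (M : Submodule K V) [FiniteDimensional K M] (φ : V →ₗ[K] K) {x : V} (hx : x ∈ M)
    (hφx : φ x ≠ 0) : Module.finrank K ↥(M ⊓ LinearMap.ker φ) + 1 = Module.finrank K M := by
  have hφ : φ.domRestrict M ≠ 0 := fun h => hφx (by simpa using congr($h ⟨x, hx⟩))
  rw [← Module.Dual.finrank_ker_add_one_of_ne_zero hφ, LinearMap.ker_domRestrict,
    ← map_comap_subtype, finrank_map_subtype_eq]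

theorem finrank_map_mulLeft {K A : Type*} [CommRing K] [Ring A] [IsDomain A] [Algebra K A]
    {r : A} (hr : r ≠ 0) (M : Submodule K A) :
    Module.finrank K (M.map (LinearMap.mulLeft K r)) = Module.finrank K M :=
  (equivMapOfInjective _ (mul_right_injective₀ hr) M).finrank_eq.symm

end Submodule

namespace BinaryForm

noncomputable def shear : MvPolynomial (Fin 2) ℚ →ₐ[ℚ] MvPolynomial (Fin 2) ℚ :=
  aeval ![X 0 + X 1, -X 1]

noncomputable def swap : MvPolynomial (Fin 2) ℚ →ₐ[ℚ] MvPolynomial (Fin 2) ℚ :=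
  aeval ![X 1, X 0]

@[simp] theorem shear_X_zero : shear (X 0) = X 0 + X 1 := by simp [shear]

@[simp] theorem shear_X_one : shear (X 1) = -X 1 := by simp [shear]

@[simp] theorem swap_X_zero : swap (X 0) = X 1 := by simp [swap]

@[simp] theorem swap_X_one : swap (X 1) = X 0 := by simp [swap]

theorem shear_linForm (c : ℚ × ℚ) : shear (linForm c) = linForm (c.1, c.1 - c.2) := by
  simp only [linForm, map_add, map_mul, algHom_C, algebraMap_eq, shear_X_zero, shear_X_one, C_sub]
  ring

theorem swap_linForm (c : ℚ × ℚ) : swap (linForm c) = linForm (c.2, c.1) := by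
  simp only [linForm, map_add, map_mul, algHom_C, algebraMap_eq, swap_X_zero, swap_X_one]
  ring

theorem linForm_zero_one : linForm ((0 : ℚ), (1 : ℚ)) = X 1 := by simp [linForm]

theorem linForm_one_neg_one : linForm ((1 : ℚ), (-1 : ℚ)) = X 0 - X 1 := by
  simp [linForm, sub_eq_add_neg]

noncomputable def eigenForms (ε : ℚ) (n : ℕ) : Submodule ℚ (MvPolynomial (Fin 2) ℚ) :=
  homogeneousSubmodule (Fin 2) ℚ n ⊓ LinearMap.ker (substT - ε • LinearMap.id) ⊓
    LinearMap.ker (substS - ε • LinearMap.id)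

variable {ε : ℚ} {n : ℕ} {p : MvPolynomial (Fin 2) ℚ}

theorem mem_eigenForms :
    p ∈ eigenForms ε n ↔ p.IsHomogeneous n ∧ shear p = ε • p ∧ swap p = ε • p := by
  simp [eigenForms, sub_eq_zero, and_assoc, substT, substS, shear, swap]

theorem eigenForms_neg_one (n : ℕ) :
    eigenForms (-1) n = homogeneousSubmodule (Fin 2) ℚ n ⊓
      LinearMap.ker (LinearMap.id + substT) ⊓ LinearMap.ker (LinearMap.id + substS) := by
  ext p
  simp [mem_eigenForms, add_eq_zero_iff_eq_neg', and_assoc, substT, substS, shear, swap]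

instance (ε : ℚ) (n : ℕ) : FiniteDimensional ℚ (eigenForms ε n) :=
  have : Module.Finite ℚ (homogeneousSubmodule (Fin 2) ℚ n) :=
    Module.Finite.iff_fg.2 (homogeneousSubmodule_fg (σ := Fin 2) (R := ℚ) n)
  Submodule.finiteDimensional_of_le (inf_le_left.trans inf_le_left)

theorem mul_mem_eigenForms_iff {r g : MvPolynomial (Fin 2) ℚ} {δ : ℚ} {k m : ℕ}
    (hr : r.IsHomogeneous k) (hr0 : r ≠ 0) (hδ : δ ≠ 0) (hT : shear r = δ • r)
    (hS : swap r = δ • r) : r * g ∈ eigenForms (δ * ε) (k + m) ↔ g ∈ eigenForms ε m := by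
  have key : ∀ x, δ • r * x = (δ * ε) • (r * g) ↔ x = ε • g := fun x => by
    rw [smul_mul_assoc, mul_smul, smul_right_inj hδ, ← mul_smul_comm, mul_right_inj' hr0]
  simp only [mem_eigenForms, map_mul, hT, hS, key]
  exact and_congr ⟨hr.of_mul_left hr0, hr.mul⟩ Iff.rfl

noncomputable def f2 : MvPolynomial (Fin 2) ℚ := X 0 ^ 2 + X 0 * X 1 + X 1 ^ 2

theorem f2_pow_mem_eigenForms {m : ℕ} (hm : Even m) : f2 ^ (m / 2) ∈ eigenForms 1 m := by
  have hf2 : f2.IsHomogeneous 2 :=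
    ((isHomogeneous_X_pow _ _).add ((isHomogeneous_X _ _).mul (isHomogeneous_X _ _))).add
      (isHomogeneous_X_pow _ _)
  refine mem_eigenForms.2 ⟨?_, ?_, ?_⟩
  · simpa [Nat.mul_div_cancel' (even_iff_two_dvd.1 hm)] using hf2.pow (m / 2)
  · simp only [f2, map_pow, map_add, map_mul, shear_X_zero, shear_X_one, one_smul]
    ring
  · simp only [f2, map_pow, map_add, map_mul, swap_X_zero, swap_X_one, one_smul]
    ring

theorem eval_f2_pow (k : ℕ) : eval ![1, 0] (f2 ^ k) = 1 := by
  simp [f2]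

def wOrbit : Fin 3 → ℚ × ℚ := ![(0, 1), (1, 0), (1, 1)]

/-- Each of these linear forms is negated by one of the six reflections in the group generated
by `shear` and `swap`. -/
def sixLines : Fin 6 → ℚ × ℚ := ![(0, 1), (1, 0), (1, 1), (1, -1), (1, 2), (2, 1)]

theorem wOrbit_pairwise : Pairwise fun i j =>
    (wOrbit i).1 * (wOrbit j).2 ≠ (wOrbit j).1 * (wOrbit i).2 := by
  intro i j hij
  fin_cases i <;> fin_cases j <;> simp_all [wOrbit]

theorem sixLines_pairwise : Pairwise fun i j =>
    (sixLines i).1 * (sixLines j).2 ≠ (sixLines j).1 * (sixLines i).2 := by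
  intro i j hij
  fin_cases i <;> fin_cases j <;> simp_all [sixLines] <;> norm_num

noncomputable def f6 : MvPolynomial (Fin 2) ℚ := ∏ i, linForm (wOrbit i) ^ 2

noncomputable def J : MvPolynomial (Fin 2) ℚ := ∏ i, linForm (sixLines i)

theorem isHomogeneous_f6 : f6.IsHomogeneous 6 := by
  have := IsHomogeneous.prod Finset.univ _ _ fun i _ =>
    (isHomogeneous_linForm (wOrbit i)).pow 2
  rwa [Finset.sum_const, Finset.card_univ, Fintype.card_fin] at this

theorem isHomogeneous_J : J.IsHomogeneous 6 := by
  have := IsHomogeneous.prod Finset.univ _ _ fun i _ => isHomogeneous_linForm (sixLines i)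
  rwa [Finset.sum_const, Finset.card_univ, Fintype.card_fin] at this

theorem f6_ne_zero : f6 ≠ 0 :=
  Finset.prod_ne_zero_iff.2 fun i _ => pow_ne_zero _ (irreducible_linForm (by
    fin_cases i <;> simp [wOrbit])).ne_zero

theorem J_ne_zero : J ≠ 0 :=
  Finset.prod_ne_zero_iff.2 fun i _ => (irreducible_linForm (by
    fin_cases i <;> simp [sixLines])).ne_zero

theorem shear_f6 : shear f6 = (1 : ℚ) • f6 := by
  simp only [f6, Fin.prod_univ_three, wOrbit, Matrix.cons_val, linForm, map_mul, map_add,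
    map_pow, map_zero, map_one, shear_X_zero, shear_X_one, one_smul]
  ring

theorem swap_f6 : swap f6 = (1 : ℚ) • f6 := by
  simp only [f6, Fin.prod_univ_three, wOrbit, Matrix.cons_val, linForm, map_mul, map_add,
    map_pow, map_zero, map_one, swap_X_zero, swap_X_one, one_smul]
  ring

theorem shear_J : shear J = (-1 : ℚ) • J := by
  simp only [J, Fin.prod_univ_six, sixLines, Matrix.cons_val, linForm, map_mul, map_add,
    map_zero, map_one, map_neg, map_ofNat, shear_X_zero, shear_X_one, neg_one_smul]
  ring

theorem swap_J : swap J = (-1 : ℚ) • J := by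
  simp only [J, Fin.prod_univ_six, sixLines, Matrix.cons_val, linForm, map_mul, map_add,
    map_zero, map_one, map_neg, map_ofNat, swap_X_zero, swap_X_one, neg_one_smul]
  ring

theorem eval_f6 : eval ![1, 0] f6 = 0 := by
  simp [f6, Fin.prod_univ_three, wOrbit, linForm]

theorem X_one_dvd_shear_X_sub : ∀ i, X 1 ∣ shear (X i) - X i :=
  Fin.forall_fin_two.2 ⟨⟨1, by rw [shear_X_zero]; ring⟩, ⟨-2, by rw [shear_X_one]; ring⟩⟩

theorem X_zero_sub_X_one_dvd_swap_X_sub : ∀ i, X 0 - X 1 ∣ swap (X i) - X i :=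
  Fin.forall_fin_two.2 ⟨⟨-1, by rw [swap_X_zero]; ring⟩, ⟨1, by rw [swap_X_one]; ring⟩⟩

theorem J_dvd_of_mem (hp : p ∈ eigenForms (-1) n) : J ∣ p := by
  obtain ⟨-, hT, hS⟩ := mem_eigenForms.1 hp
  rw [neg_one_smul] at hT hS
  have h2 : IsUnit (2 : ℚ) := by norm_num
  have hw : linForm (0, 1) ∣ p := by
    rw [linForm_zero_one]
    exact dvd_of_algHom_eq_neg h2 shear X_one_dvd_shear_X_sub hT
  have hv : linForm (1, 0) ∣ p := by simpa [swap_linForm, hS] using map_dvd swap hw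
  have hvw : linForm (1, 1) ∣ p := by simpa [shear_linForm, hT] using map_dvd shear hv
  have hd : linForm (1, -1) ∣ p := by
    rw [linForm_one_neg_one]
    exact dvd_of_algHom_eq_neg h2 swap X_zero_sub_X_one_dvd_swap_X_sub hS
  have hd₁ : linForm (1, 2) ∣ p := by
    simpa [shear_linForm, hT, one_add_one_eq_two] using map_dvd shear hd
  have hd₂ : linForm (2, 1) ∣ p := by simpa [swap_linForm, hS] using map_dvd swap hd₁
  have h : ∀ i, linForm (sixLines i) ^ 1 ∣ p := by
    intro i
    rw [pow_one]
    fin_cases i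
    exacts [hw, hv, hvw, hd, hd₁, hd₂]
  simpa [J] using prod_linForm_pow_dvd sixLines_pairwise 1 h

theorem f6_dvd_of_mem (hp : p ∈ eigenForms 1 n) (h0 : eval ![1, 0] p = 0) : f6 ∣ p := by
  obtain ⟨hhom, hT, hS⟩ := mem_eigenForms.1 hp
  rw [one_smul] at hT hS
  have hw : linForm (0, 1) ^ 2 ∣ p := by
    obtain ⟨r, rfl⟩ := X_one_dvd_of_eval_eq_zero hhom h0
    have hr : shear r = -r := by
      rw [map_mul, shear_X_one] at hT
      exact mul_left_cancel₀ (X_ne_zero 1) (by linear_combination -hT)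
    obtain ⟨s, rfl⟩ :=
      dvd_of_algHom_eq_neg (by norm_num : IsUnit (2 : ℚ)) shear X_one_dvd_shear_X_sub hr
    exact ⟨s, by rw [linForm_zero_one]; ring⟩
  have hv : linForm (1, 0) ^ 2 ∣ p := by simpa [swap_linForm, hS] using map_dvd swap hw
  have hvw : linForm (1, 1) ^ 2 ∣ p := by simpa [shear_linForm, hT] using map_dvd shear hv
  have h : ∀ i, linForm (wOrbit i) ^ 2 ∣ p := by
    intro i
    fin_cases i
    exacts [hw, hv, hvw]
  exact prod_linForm_pow_dvd wOrbit_pairwise (fun _ => 2) h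

theorem J_mul_mem_iff {g : MvPolynomial (Fin 2) ℚ} {m : ℕ} :
    J * g ∈ eigenForms (-1) (6 + m) ↔ g ∈ eigenForms 1 m := by
  simpa using
    mul_mem_eigenForms_iff (ε := 1) isHomogeneous_J J_ne_zero (by norm_num) shear_J swap_J

theorem f6_mul_mem_iff {g : MvPolynomial (Fin 2) ℚ} {m : ℕ} :
    f6 * g ∈ eigenForms 1 (6 + m) ↔ g ∈ eigenForms 1 m := by
  simpa using
    mul_mem_eigenForms_iff (ε := 1) isHomogeneous_f6 f6_ne_zero one_ne_zero shear_f6 swap_f6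

theorem eigenForms_neg_one_add_six (m : ℕ) :
    eigenForms (-1) (6 + m) = (eigenForms 1 m).map (LinearMap.mulLeft ℚ J) := by
  ext p
  refine ⟨fun hp => ?_, ?_⟩
  · obtain ⟨g, rfl⟩ := J_dvd_of_mem hp
    exact ⟨g, J_mul_mem_iff.1 hp, rfl⟩
  · rintro ⟨g, hg, rfl⟩
    exact J_mul_mem_iff.2 hg

noncomputable def evalOneZero : MvPolynomial (Fin 2) ℚ →ₗ[ℚ] ℚ := (aeval ![1, 0]).toLinearMap

theorem eigenForms_one_add_six_inf_ker (m : ℕ) :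
    eigenForms 1 (6 + m) ⊓ LinearMap.ker evalOneZero =
      (eigenForms 1 m).map (LinearMap.mulLeft ℚ f6) := by
  ext p
  refine ⟨fun ⟨hp, h0⟩ => ?_, ?_⟩
  · obtain ⟨g, rfl⟩ := f6_dvd_of_mem hp h0
    exact ⟨g, f6_mul_mem_iff.1 hp, rfl⟩
  · rintro ⟨g, hg, rfl⟩
    exact ⟨f6_mul_mem_iff.2 hg, by simp [evalOneZero, eval_f6]⟩

theorem eigenForms_neg_one_eq_bot_of_lt (hn : n < 6) : eigenForms (-1) n = ⊥ :=
  (Submodule.eq_bot_iff _).2 fun _ hp => (mem_eigenForms.1 hp).1.eq_zero_of_dvd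
    (J_dvd_of_mem hp) (by rwa [isHomogeneous_J.totalDegree J_ne_zero])

theorem eigenForms_one_inf_ker_eq_bot_of_lt (hn : n < 6) :
    eigenForms 1 n ⊓ LinearMap.ker evalOneZero = ⊥ :=
  (Submodule.eq_bot_iff _).2 fun _ ⟨hp, h0⟩ => (mem_eigenForms.1 hp).1.eq_zero_of_dvd
    (f6_dvd_of_mem hp h0) (by rwa [isHomogeneous_f6.totalDegree f6_ne_zero])

theorem eigenForms_neg_one_eq_bot_of_odd (hn : Odd n) : eigenForms (-1) n = ⊥ := by
  refine (Submodule.eq_bot_iff _).2 fun p hp => ?_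
  obtain ⟨hhom, hT, hS⟩ := mem_eigenForms.1 hp
  rw [neg_one_smul] at hT hS
  have hcube : (swap.comp shear).comp ((swap.comp shear).comp (swap.comp shear)) =
      aeval ((-1 : MvPolynomial (Fin 2) ℚ) • X) := by
    ext i
    fin_cases i <;> simp
  have hrot : swap (shear p) = p := by rw [hT, map_neg, hS, neg_neg]
  refine CharZero.eq_neg_self_iff.1 (calc
    p = aeval ((-1 : MvPolynomial (Fin 2) ℚ) • X) p := by
      rw [← hcube]; simp only [AlgHom.comp_apply, hrot]
    _ = -p := by rw [hhom.aeval_smul, aeval_X_left_apply, hn.neg_one_pow, neg_one_mul])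

theorem finrank_eigenForms_one {m : ℕ} (hm : Even m) :
    Module.finrank ℚ (eigenForms 1 m) = m / 6 + 1 := by
  induction m using Nat.strong_induction_on with
  | _ m ih =>
  rw [← Submodule.finrank_inf_ker_add_one _ evalOneZero (f2_pow_mem_eigenForms hm)
    (by simp [evalOneZero, eval_f2_pow])]
  rcases lt_or_ge m 6 with hm6 | hm6
  · rw [eigenForms_one_inf_ker_eq_bot_of_lt hm6, finrank_bot]
    omega
  · obtain ⟨k, rfl⟩ := Nat.exists_eq_add_of_le hm6
    rw [eigenForms_one_add_six_inf_ker, Submodule.finrank_map_mulLeft f6_ne_zero,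
      ih k (by omega) ((Nat.even_add.1 hm).1 (by decide))]
    omega

end BinaryForm

/-- The dimension of the space of homogeneous polynomials `p(v,w)` of degree `n`
satisfying `p(v,w) = -p(v+w,-w)` and `p(v,w) = -p(w,v)` is `0` for odd `n` and
`⌊n/6⌋` for even `n`. -/
theorem dim_ker_n (n : ℕ) :
    Module.finrank ℚ
      ↥(homogeneousSubmodule (Fin 2) ℚ n ⊓
          LinearMap.ker (LinearMap.id + substT) ⊓
          LinearMap.ker (LinearMap.id + substS)) =
      if Odd n then 0 else n / 6 := by
  rw [← BinaryForm.eigenForms_neg_one]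
  split_ifs with hn
  · rw [BinaryForm.eigenForms_neg_one_eq_bot_of_odd hn, finrank_bot]
  rcases lt_or_ge n 6 with hn6 | hn6
  · rw [BinaryForm.eigenForms_neg_one_eq_bot_of_lt hn6, finrank_bot]
    omega
  · obtain ⟨m, rfl⟩ := Nat.exists_eq_add_of_le hn6
    rw [BinaryForm.eigenForms_neg_one_add_six, Submodule.finrank_map_mulLeft BinaryForm.J_ne_zero,
      BinaryForm.finrank_eigenForms_one ((Nat.even_add.1 (Nat.not_odd_iff_even.1 hn)).1
        (by decide))]
    omega
end

section
/- Let l ≥ 2 be an integer and let q ∈ ℂ be a primitive l-th root of unity. If a homogeneous polynomial p(v,w) in two variables over ℂ satisfies both functional equations p(v,w) = -q·p(v+w, (q-1)v - w) and p(v,w) = -p(w,v), then p = 0. -/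
/-!
Composing the two functional equations shows that the zero set of `p` is invariant under
`M (v, w) = (v + w, (q - 1) w - v)`, and the antisymmetry makes `p` vanish on the diagonal.
`M` has trace and determinant `q`, so its eigenvalues satisfy `μ + ν = μ ν = q`; as `|q| = 1` and
`q ≠ 1`, no power of `μ / ν` is `1`, hence the `M`-orbit of `(1, 1)` meets infinitely many lines
through the origin. A binary form vanishing on infinitely many lines is zero.
-/

open MvPolynomial

namespace MvPolynomial

lemma eval_aeval {R σ τ : Type*} [CommSemiring R] (g : σ → MvPolynomial τ R) (x : τ → R)
    (p : MvPolynomial σ R) : eval x (aeval g p) = eval (fun i => eval x (g i)) p :=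
  eval₂Hom_bind₁ _ _ _ _

lemma IsHomogeneous.eval_smul {R σ : Type*} [CommSemiring R] {p : MvPolynomial σ R} {n : ℕ}
    (hp : p.IsHomogeneous n) (c : R) (x : σ → R) : eval (c • x) p = c ^ n * eval x p := by
  simp only [eval_eq, Finset.mul_sum]
  refine Finset.sum_congr rfl fun d hd => ?_
  have hdeg : ∑ i ∈ d.support, d i = n := by
    simpa [Finsupp.weight_apply, Finsupp.sum] using hp (mem_support_iff.mp hd)
  simp only [Pi.smul_apply, smul_eq_mul, mul_pow, Finset.prod_mul_distrib,
    Finset.prod_pow_eq_pow_sum, hdeg]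
  ring

variable {K : Type*} [Field K]

lemma polynomial_eval_aeval {R σ : Type*} [CommSemiring R] (g : σ → Polynomial R) (t : R)
    (p : MvPolynomial σ R) : (aeval g p).eval t = eval (fun i => (g i).eval t) p := by
  rw [← Polynomial.coe_aeval_eq_eval, ← AlgHom.comp_apply, comp_aeval]
  rfl

lemma vec_eq_smul_slope {x : Fin 2 → K} (hx : x 0 ≠ 0) : x = x 0 • ![1, x 1 / x 0] := by
  ext i
  fin_cases i <;> simp [mul_div_cancel₀ _ hx]

lemma IsHomogeneous.eq_zero_of_infinite_setOf_eval_eq_zero {p : MvPolynomial (Fin 2) K} {n : ℕ}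
    (hp : p.IsHomogeneous n) (h : {t : K | eval ![1, t] p = 0}.Infinite) : p = 0 := by
  have : Infinite K := Set.infinite_univ_iff.mp (h.mono (Set.subset_univ _))
  have heval : ∀ t, (MvPolynomial.aeval ![1, Polynomial.X] p).eval t = eval ![1, t] p := by
    intro t
    rw [polynomial_eval_aeval]
    congr
    ext i
    fin_cases i <;> simp
  have hdehom : ∀ t, eval ![1, t] p = 0 := by
    have hF : MvPolynomial.aeval ![1, Polynomial.X] p = 0 :=
      Polynomial.eq_zero_of_infinite_isRoot _ (h.mono fun t ht => (heval t).trans ht)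
    simp [← heval, hF]
  have hX : X 0 * p = 0 := by
    refine ((isHomogeneous_X K 0).mul hp).eq_zero_of_forall_eval_eq_zero fun x => ?_
    rw [eval_mul, eval_X]
    by_cases hx : x 0 = 0
    · rw [hx, zero_mul]
    · rw [vec_eq_smul_slope hx, hp.eval_smul, hdehom]
      simp
  simpa [X_ne_zero] using hX

lemma IsHomogeneous.eq_zero_of_eval_eq_zero_of_pairwise {ι : Type*} [Infinite ι]
    {p : MvPolynomial (Fin 2) K} {n : ℕ} (hp : p.IsHomogeneous n) (P : ι → Fin 2 → K)
    (hP : Pairwise fun i j => P i 0 * P j 1 ≠ P j 0 * P i 1) (h : ∀ i, eval (P i) p = 0) :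
    p = 0 := by
  set G := {i | P i 0 ≠ 0}
  have hbad : {i | P i 0 = 0}.Subsingleton := fun i (hi : P i 0 = 0) j (hj : P j 0 = 0) =>
    by_contra fun hij => hP hij (by rw [hi, hj, zero_mul, zero_mul])
  have hG : G.Infinite := by
    simpa only [Set.compl_ofPred] using hbad.finite.infinite_compl
  have hinj : G.InjOn fun i => P i 1 / P i 0 := by
    intro i hi j hj hij
    by_contra hne
    exact hP hne (by rw [div_eq_div_iff hi hj] at hij; linear_combination -hij)
  refine hp.eq_zero_of_infinite_setOf_eval_eq_zero ((hG.image hinj).mono ?_)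
  rintro _ ⟨i, hi, rfl⟩
  have hPi := h i
  rw [vec_eq_smul_slope hi, hp.eval_smul] at hPi
  exact (mul_eq_zero.mp hPi).resolve_left (pow_ne_zero _ hi)

end MvPolynomial

lemma exists_add_eq_and_mul_eq {K : Type*} [Field K] [IsAlgClosed K] [CharZero K] (s t : K) :
    ∃ μ ν : K, μ + ν = s ∧ μ * ν = t := by
  obtain ⟨r, hr⟩ := IsAlgClosed.exists_pow_nat_eq (s ^ 2 - 4 * t) two_pos
  refine ⟨(s + r) / 2, (s - r) / 2, ?_, ?_⟩
  · ring
  · field_simp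
    linear_combination -hr

section FunctionalEquations

variable {K : Type*} [Field K] {p : MvPolynomial (Fin 2) K}

lemma eval_eq_neg_eval_swap (h2 : p = -(aeval ![X 1, X 0] p)) (x : Fin 2 → K) :
    eval x p = -eval ![x 1, x 0] p := by
  conv_lhs => rw [h2]
  rw [map_neg, MvPolynomial.eval_aeval]
  congr
  ext i
  fin_cases i <;> simp

lemma eval_eq_neg_mul_eval_transform {q : K}
    (h1 : p = -(C q * aeval ![X 0 + X 1, C (q - 1) * X 0 - X 1] p)) (x : Fin 2 → K) :
    eval x p = -(q * eval ![x 0 + x 1, (q - 1) * x 0 - x 1] p) := by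
  conv_lhs => rw [h1]
  rw [map_neg, eval_mul, eval_C, MvPolynomial.eval_aeval]
  congr
  ext i
  fin_cases i <;> simp

def orbitStep (q : K) (x : Fin 2 → K) : Fin 2 → K := ![x 0 + x 1, (q - 1) * x 1 - x 0]

lemma eval_orbitStep_eq_zero {q : K} (hq : q ≠ 0)
    (h1 : p = -(C q * aeval ![X 0 + X 1, C (q - 1) * X 0 - X 1] p))
    (h2 : p = -(aeval ![X 1, X 0] p)) {x : Fin 2 → K} (hx : eval x p = 0) :
    eval (orbitStep q x) p = 0 := by
  have hswap : eval ![x 1, x 0] p = 0 := by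
    simpa [hx] using eval_eq_neg_eval_swap h2 x
  have := eval_eq_neg_mul_eval_transform h1 ![x 1, x 0]
  simp only [Matrix.cons_val_zero, Matrix.cons_val_one, hswap, zero_eq_neg, mul_eq_zero, hq,
    false_or] at this
  rwa [orbitStep, add_comm]

/-- When `μ + ν = μ * ν = q`, the vectors `(1, μ - 1)` and `(1, ν - 1)` are eigenvectors of
`orbitStep q` with eigenvalues `μ` and `ν`; `orbitPoint μ ν k` is `(orbitStep q)^[k] (μ - ν, μ - ν)`
written in this eigenbasis. -/
def orbitPoint (μ ν : K) (k : ℕ) : Fin 2 → K :=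
  ![(2 - ν) * μ ^ k + (μ - 2) * ν ^ k, (2 - ν) * μ ^ k * (μ - 1) + (μ - 2) * ν ^ k * (ν - 1)]

lemma orbitPoint_zero (μ ν : K) : orbitPoint μ ν 0 = ![μ - ν, μ - ν] := by
  ext i
  fin_cases i
  · simp [orbitPoint]
  · simp [orbitPoint]
    ring

lemma orbitPoint_succ {q μ ν : K} (hsum : μ + ν = q) (hprod : μ * ν = q) (k : ℕ) :
    orbitPoint μ ν (k + 1) = orbitStep q (orbitPoint μ ν k) := by
  subst hsum
  ext i
  fin_cases i
  · simp [orbitPoint, orbitStep]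
    ring
  · simp [orbitPoint, orbitStep]
    linear_combination -((2 - ν) * μ ^ k + (μ - 2) * ν ^ k) * hprod

lemma orbitPoint_det (μ ν : K) (k j : ℕ) :
    orbitPoint μ ν k 0 * orbitPoint μ ν j 1 - orbitPoint μ ν j 0 * orbitPoint μ ν k 1 =
      (2 - ν) * (μ - 2) * (μ - ν) * (μ ^ j * ν ^ k - μ ^ k * ν ^ j) := by
  simp [orbitPoint]
  ring

lemma eval_orbitPoint_eq_zero [CharZero K] {q μ ν : K} (hsum : μ + ν = q) (hprod : μ * ν = q)
    (hq : q ≠ 0) (h1 : p = -(C q * aeval ![X 0 + X 1, C (q - 1) * X 0 - X 1] p))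
    (h2 : p = -(aeval ![X 1, X 0] p)) (k : ℕ) : eval (orbitPoint μ ν k) p = 0 := by
  induction k with
  | zero =>
    rw [orbitPoint_zero]
    have := eval_eq_neg_eval_swap h2 ![μ - ν, μ - ν]
    simp only [Matrix.cons_val_zero, Matrix.cons_val_one] at this
    exact CharZero.eq_neg_self_iff.mp this
  | succ k ih =>
    rw [orbitPoint_succ hsum hprod]
    exact eval_orbitStep_eq_zero hq h1 h2 ih

end FunctionalEquations

section UnitCircle

variable {q μ ν : ℂ}

/-- Equal powers force `‖μ‖ = ‖ν‖ = 1`, and then `conj q = μ⁻¹ + ν⁻¹ = (μ + ν) / (μ * ν) = 1`. -/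
lemma pow_ne_pow_of_add_eq_of_mul_eq (hq : ‖q‖ = 1) (hq1 : q ≠ 1) (hsum : μ + ν = q)
    (hprod : μ * ν = q) {d : ℕ} (hd : d ≠ 0) : μ ^ d ≠ ν ^ d := by
  intro h
  have hnorm : ‖μ‖ = ‖ν‖ :=
    (pow_left_inj₀ (norm_nonneg _) (norm_nonneg _) hd).mp (by rw [← norm_pow, ← norm_pow, h])
  have hμ : ‖μ‖ = 1 := by
    rw [← hprod, norm_mul, ← hnorm] at hq
    nlinarith [norm_nonneg μ]
  have hν : ‖ν‖ = 1 := hnorm ▸ hμ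
  have hq0 : q ≠ 0 := by rintro rfl; simp at hq
  apply hq1
  have hconj : starRingEnd ℂ q = 1 := by
    rw [← hsum, map_add, ← Complex.inv_eq_conj hμ, ← Complex.inv_eq_conj hν,
      inv_add_inv (by rintro rfl; simp at hμ) (by rintro rfl; simp at hν), hsum, hprod,
      div_self hq0]
  simpa using congrArg (starRingEnd ℂ) hconj

lemma pow_mul_pow_ne_pow_mul_pow (hq : ‖q‖ = 1) (hq1 : q ≠ 1) (hsum : μ + ν = q)
    (hprod : μ * ν = q) {k j : ℕ} (hkj : k ≠ j) : μ ^ j * ν ^ k ≠ μ ^ k * ν ^ j := by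
  wlog hlt : k < j generalizing k j
  · exact (this hkj.symm (by omega)).symm
  obtain ⟨d, rfl⟩ := Nat.exists_eq_add_of_lt hlt
  have hqk : q ^ k ≠ 0 := pow_ne_zero _ (by rintro rfl; simp at hq)
  intro h
  refine pow_ne_pow_of_add_eq_of_mul_eq hq hq1 hsum hprod (d := d + 1) (by omega)
    (mul_left_cancel₀ hqk ?_)
  rw [← hprod]
  linear_combination h

lemma orbitPoint_pairwise (hq : ‖q‖ = 1) (hq1 : q ≠ 1) (hsum : μ + ν = q) (hprod : μ * ν = q) :
    Pairwise fun k j =>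
      orbitPoint μ ν k 0 * orbitPoint μ ν j 1 ≠ orbitPoint μ ν j 0 * orbitPoint μ ν k 1 := by
  have hq4 : q ≠ 4 := by rintro rfl; norm_num at hq
  have hμ : μ ≠ 2 := by rintro rfl; exact hq4 (by linear_combination hprod - 2 * hsum)
  have hν : ν ≠ 2 := by rintro rfl; exact hq4 (by linear_combination hprod - 2 * hsum)
  have hμν : μ ≠ ν := by simpa using pow_ne_pow_of_add_eq_of_mul_eq hq hq1 hsum hprod one_ne_zero
  intro k j hkj
  rw [← sub_ne_zero, orbitPoint_det]
  refine mul_ne_zero (mul_ne_zero (mul_ne_zero ?_ ?_) ?_) ?_ <;> rw [sub_ne_zero]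
  exacts [hν.symm, hμ, hμν, pow_mul_pow_ne_pow_mul_pow hq hq1 hsum hprod hkj]

end UnitCircle

/-- For `q` a primitive `l`-th root of unity with `l ≥ 2`, no nonzero homogeneous
polynomial `p(v,w)` over `ℂ` satisfies both `p(v,w) = -q·p(v+w, (q-1)v-w)` and
`p(v,w) = -p(w,v)`. -/
theorem qker_poly_trivial (l : ℕ) (hl : 2 ≤ l) (q : ℂ) (hq : IsPrimitiveRoot q l)
    (n : ℕ) (p : MvPolynomial (Fin 2) ℂ) (hp : p.IsHomogeneous n)
    (h1 : p = -(C q * aeval ![X 0 + X 1, C (q - 1) * X 0 - X 1] p))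
    (h2 : p = -(aeval ![X 1, X 0] p)) :
    p = 0 := by
  have hq0 : q ≠ 0 := hq.ne_zero (by omega)
  have hq1 : q ≠ 1 := hq.ne_one (by omega)
  have hqnorm : ‖q‖ = 1 := hq.norm'_eq_one (by omega)
  obtain ⟨μ, ν, hsum, hprod⟩ := exists_add_eq_and_mul_eq q q
  exact hp.eq_zero_of_eval_eq_zero_of_pairwise (orbitPoint μ ν)
    (orbitPoint_pairwise hqnorm hq1 hsum hprod) (eval_orbitPoint_eq_zero hsum hprod hq0 h1 h2)
end

section
/- Let q ∈ ℂ be a root of unity and let λ ∈ ℂ satisfy λ² - qλ + q = 0. If |λ| = 1, then q = 1 and λ² - λ + 1 = 0; in particular λ is a primitive 6-th root of unity. -/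
/-!
Since `q` is a root of unity, `|q| = 1`, and `λ² = q (λ - 1)` then gives `|λ - 1| = |λ| = 1`.
A point of the unit circle at distance one from `1` has real part `1/2`, so `λ + λ̄ = 1`; as
`λ̄ = λ⁻¹`, this is `λ² - λ + 1 = 0`, whose roots are the primitive sixth roots of unity.
Comparing with `λ² - qλ + q = 0` gives `(q - 1)(λ - 1) = 0`, and `λ ≠ 1`.
-/

open Polynomial

theorem IsPrimitiveRoot.of_sq_sub_add_one {R : Type*} [CommRing R] [IsDomain R] [CharZero R]
    {z : R} (hz : z ^ 2 - z + 1 = 0) : IsPrimitiveRoot z 6 := by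
  rw [← isRoot_cyclotomic_iff_charZero (by norm_num), cyclotomic_six]
  simpa using hz

namespace Complex

theorem sq_sub_add_one_eq_zero_of_norm_eq_one_of_norm_sub_one_eq_one {z : ℂ}
    (hz : ‖z‖ = 1) (hz1 : ‖z - 1‖ = 1) : z ^ 2 - z + 1 = 0 := by
  have hz0 : z ≠ 0 := norm_ne_zero_iff.mp (by rw [hz]; exact one_ne_zero)
  have hre : 2 * z.re = 1 := by
    have h := normSq_sub z 1
    rw [normSq_eq_norm_sq, normSq_eq_norm_sq, hz, hz1] at h
    simp only [map_one, mul_one] at h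
    linarith
  have hsum : z + z⁻¹ = 1 := by
    rw [inv_eq_conj hz, add_conj]
    exact_mod_cast hre
  calc z ^ 2 - z + 1 = z * (z + z⁻¹ - 1) := by field_simp; ring
    _ = 0 := by rw [hsum, sub_self, mul_zero]

end Complex

/-- If `q` is a root of unity, `λ` satisfies `λ² - qλ + q = 0`, and `|λ| = 1`, then
`q = 1`, `λ² - λ + 1 = 0`, and `λ` is a primitive 6-th root of unity. -/
theorem eigenvalue_modulus_one (q lam : ℂ) (hq : ∃ m : ℕ, 0 < m ∧ q ^ m = 1)
    (hlam : lam ^ 2 - q * lam + q = 0) (habs : ‖lam‖ = 1) :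
    q = 1 ∧ lam ^ 2 - lam + 1 = 0 ∧ IsPrimitiveRoot lam 6 := by
  obtain ⟨m, hm, hqm⟩ := hq
  have hq_norm : ‖q‖ = 1 := Complex.norm_eq_one_of_pow_eq_one hqm hm.ne'
  have hfactor : lam ^ 2 = q * (lam - 1) := by linear_combination hlam
  have hsub_norm : ‖lam - 1‖ = 1 := by
    simpa [habs, hq_norm] using (congrArg (‖·‖) hfactor).symm
  have hquad := Complex.sq_sub_add_one_eq_zero_of_norm_eq_one_of_norm_sub_one_eq_one habs hsub_norm
  have hsub_ne_zero : lam - 1 ≠ 0 := fun h => by simp [h] at hsub_norm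
  have hq1 : q = 1 := by
    have h : (q - 1) * (lam - 1) = 0 := by linear_combination hquad - hlam
    exact sub_eq_zero.mp ((mul_eq_zero.mp h).resolve_right hsub_ne_zero)
  exact ⟨hq1, hquad, .of_sq_sub_add_one hquad⟩
end

section
/- No root of unity q ∈ ℂ satisfies the equation q⁴ - q³ + 2q² + 1 = 0. -/
/-! A root of unity lies on the unit circle, where `conj q = q⁻¹`. Since the quartic has real
coefficients, conjugating `q⁴ - q³ + 2q² + 1 = 0` and clearing denominators shows that `q` is also
a root of the reciprocal quartic `q⁴ + 2q² - q + 1`. The difference of the two is `q³ - q`, so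
`q ∈ {0, 1, -1}`, and none of these is a root. -/

theorem quartic_ne_zero_of_norm_eq_one {q : ℂ} (hq : ‖q‖ = 1) :
    q ^ 4 - q ^ 3 + 2 * q ^ 2 + 1 ≠ 0 := by
  intro h
  have hq0 : q ≠ 0 := norm_ne_zero_iff.mp (hq ▸ one_ne_zero)
  have hinv : q⁻¹ ^ 4 - q⁻¹ ^ 3 + 2 * q⁻¹ ^ 2 + 1 = 0 := by
    simpa [Complex.inv_eq_conj hq, map_ofNat] using congrArg (starRingEnd ℂ) h
  have hreciprocal : q ^ 4 + 2 * q ^ 2 - q + 1 = 0 := by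
    field_simp at hinv
    linear_combination hinv
  have hcubic : q * (q - 1) * (q + 1) = 0 := by linear_combination hreciprocal - h
  obtain (rfl | rfl) | rfl : (q = 0 ∨ q = 1) ∨ q = -1 := by
    simpa [sub_eq_zero, add_eq_zero_iff_eq_neg] using hcubic
  all_goals norm_num at h

/-- No root of unity `q ∈ ℂ` satisfies `q⁴ - q³ + 2q² + 1 = 0`. -/
theorem quartic_no_root_of_unity (q : ℂ) (hq : ∃ m : ℕ, 0 < m ∧ q ^ m = 1) :
    q ^ 4 - q ^ 3 + 2 * q ^ 2 + 1 ≠ 0 := by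
  obtain ⟨m, hm, hqm⟩ := hq
  exact quartic_ne_zero_of_norm_eq_one (Complex.norm_eq_one_of_pow_eq_one hqm hm.ne')
end

section
/- For every root of unity q ∈ ℂ, one has q³ - q² - 1 ≠ 0. -/
/-!
A root of unity lies on the unit circle, where `conj q = q⁻¹`. Conjugating `q³ - q² - 1 = 0`
and clearing denominators gives the reciprocal equation `1 - q - q³ = 0`; adding the two
yields `q (q + 1) = 0`, so `q = -1`, which is not a root.
-/

theorem Complex.cubic_ne_zero_of_norm_eq_one {q : ℂ} (hq : ‖q‖ = 1) :
    q ^ 3 - q ^ 2 - 1 ≠ 0 := by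
  intro h
  have hq0 : q ≠ 0 := norm_ne_zero_iff.mp (hq ▸ one_ne_zero)
  have hrecip : 1 - q - q ^ 3 = 0 := by
    have hconj : q⁻¹ ^ 3 - q⁻¹ ^ 2 - 1 = 0 := by
      simpa [Complex.inv_eq_conj hq] using congrArg (starRingEnd ℂ) h
    field_simp at hconj
    linear_combination hconj
  have hq_neg_one : q = -1 := by
    have hfactor : q * (q + 1) = 0 := by linear_combination -h - hrecip
    exact eq_neg_of_add_eq_zero_left ((mul_eq_zero.mp hfactor).resolve_left hq0)
  norm_num [hq_neg_one] at h

/-- For every root of unity `q ∈ ℂ`, one has `q³ - q² - 1 ≠ 0`. -/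
theorem cubic_nonzero_on_roots_of_unity (q : ℂ) (hq : ∃ m : ℕ, 0 < m ∧ q ^ m = 1) :
    q ^ 3 - q ^ 2 - 1 ≠ 0 := by
  obtain ⟨m, hm, hqm⟩ := hq
  exact Complex.cubic_ne_zero_of_norm_eq_one (Complex.norm_eq_one_of_pow_eq_one hqm hm.ne')
end

section
/- Let V_n be the (n+1)-dimensional ℚ-vector space of homogeneous polynomials of degree n in ℚ[v,w], and let R : V_n → V_n be the linear endomorphism defined by (R p)(v,w) = p(-w, v+w). Then the trace of R equals Σ_{k=0}^{⌊n/2⌋} (-1)^k · C(n-k, k), where C(m,j) is the binomial coefficient. -/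
/-!
Index the monomial basis of the degree-`n` forms in `v, w` by the pairs `(i, j)` with
`i + j = n`. The substitution sends `v^i w^j` to `(-w)^i (v + w)^j`, whose coefficient on
`v^i w^j` is `(-1)^i C(j, i)` by the binomial theorem. The trace is the sum of these diagonal
entries, and `C(n - i, i)` vanishes once `i > n / 2`.
-/

open MvPolynomial Finset

namespace MvPolynomial

variable (σ R : Type*) [CommSemiring R]

noncomputable def homogeneousBasis (n : ℕ) :
    Module.Basis {d : σ →₀ ℕ // d.degree = n} R (homogeneousSubmodule σ R n) :=
  (basisRestrictSupport R {d | d.degree = n}).map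
    (LinearEquiv.ofEq _ _ (homogeneousSubmodule_eq_finsupp_supported σ R n).symm)

variable {σ R}

@[simp]
lemma homogeneousBasis_repr_apply (n : ℕ) (p : homogeneousSubmodule σ R n)
    (d : {d : σ →₀ ℕ // d.degree = n}) :
    (homogeneousBasis σ R n).repr p d = coeff d (p : MvPolynomial σ R) :=
  rfl

@[simp]
lemma coe_homogeneousBasis (n : ℕ) (d : {d : σ →₀ ℕ // d.degree = n}) :
    (homogeneousBasis σ R n d : MvPolynomial σ R) = monomial d 1 :=
  congrArg AddMonoidAlgebra.ofCoeff (Finsupp.supportedEquivFinsupp_symm_single _ d 1)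

lemma coeff_aeval_monomial_self {R : Type*} [CommRing R] (d : Fin 2 →₀ ℕ) :
    coeff d (aeval ![-X 1, X 0 + X 1] (monomial d (1 : R))) =
      (-1) ^ d 0 * ((d 1).choose (d 0) : R) := by
  rw [monomial_fin_two]
  simp only [map_mul, map_pow, aeval_X, map_one, one_mul, Matrix.cons_val_zero,
    Matrix.cons_val_one]
  rw [neg_pow, ← C_1, ← C_neg, ← C_pow, X_pow_eq_monomial, C_mul_monomial, mul_one,
    coeff_monomial_mul', coeff_add_pow]
  by_cases h : d 0 ≤ d 1
  · have hsub : d - Finsupp.single 1 (d 0) =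
        Finsupp.single 0 (d 0) + Finsupp.single 1 (d 1 - d 0) := by
      ext i; fin_cases i <;> simp
    simp [h, hsub]
  · simp [h, Nat.choose_eq_zero_of_lt (not_le.mp h)]

end MvPolynomial

noncomputable def Finsupp.degreeEqEquivAntidiagonal (n : ℕ) :
    {d : Fin 2 →₀ ℕ // d.degree = n} ≃ antidiagonal n :=
  (Finsupp.equivFunOnFinite.trans (piFinTwoEquiv fun _ => ℕ)).subtypeEquiv fun d => by
    simp [Finsupp.degree_eq_sum, Fin.sum_univ_two]

theorem LinearMap.trace_eq_sum_repr_apply {R M ι : Type*} [CommRing R] [AddCommGroup M]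
    [Module R M] [Fintype ι] [DecidableEq ι] (b : Module.Basis ι R M) (f : M →ₗ[R] M) :
    trace R M f = ∑ i, b.repr (f (b i)) i := by
  simp [trace_eq_matrix_trace R b, Matrix.trace, LinearMap.toMatrix_apply]

theorem Finset.sum_range_mul_choose_sub_eq_sum_range_div_two {S : Type*} [Semiring S]
    (f : ℕ → S) (n : ℕ) :
    ∑ k ∈ range (n + 1), f k * ((n - k).choose k : S) =
      ∑ k ∈ range (n / 2 + 1), f k * ((n - k).choose k : S) := by
  refine (sum_subset (range_subset_range.mpr (by omega)) fun k _ hk => ?_).symm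
  rw [Nat.choose_eq_zero_of_lt (by simp at hk; omega), Nat.cast_zero, mul_zero]

/-- Let `V_n` be the space of homogeneous polynomials of degree `n` in `ℚ[v,w]` and let
`R : V_n → V_n` be the linear endomorphism with `(R p)(v,w) = p(-w, v+w)`. Then the trace
of `R` equals `Σ_{k=0}^{⌊n/2⌋} (-1)^k · C(n-k, k)`. -/
theorem trace_r (n : ℕ)
    (R : ↥(homogeneousSubmodule (Fin 2) ℚ n) →ₗ[ℚ] ↥(homogeneousSubmodule (Fin 2) ℚ n))
    (hR : ∀ p : ↥(homogeneousSubmodule (Fin 2) ℚ n),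
      (R p : MvPolynomial (Fin 2) ℚ) = aeval ![-X 1, X 0 + X 1] (p : MvPolynomial (Fin 2) ℚ)) :
    LinearMap.trace ℚ _ R =
      ∑ k ∈ Finset.range (n / 2 + 1), (-1 : ℚ) ^ k * ((n - k).choose k : ℚ) := by
  let b := (homogeneousBasis (Fin 2) ℚ n).reindex (Finsupp.degreeEqEquivAntidiagonal n)
  calc LinearMap.trace ℚ _ R = ∑ p : antidiagonal n, b.repr (R (b p)) p :=
        LinearMap.trace_eq_sum_repr_apply b R
    _ = ∑ p : antidiagonal n, (-1 : ℚ) ^ p.1.1 * (p.1.2.choose p.1.1 : ℚ) :=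
        Fintype.sum_congr _ _ fun p => by
          simp only [b, Module.Basis.repr_reindex_apply, Module.Basis.reindex_apply,
            homogeneousBasis_repr_apply, coe_homogeneousBasis, hR, coeff_aeval_monomial_self]
          simp [Finsupp.degreeEqEquivAntidiagonal]
    _ = ∑ p ∈ antidiagonal n, (-1 : ℚ) ^ p.1 * (p.2.choose p.1 : ℚ) :=
        sum_coe_sort _ fun p : ℕ × ℕ => (-1 : ℚ) ^ p.1 * (p.2.choose p.1 : ℚ)
    _ = ∑ k ∈ range (n + 1), (-1 : ℚ) ^ k * ((n - k).choose k : ℚ) :=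
        Nat.sum_antidiagonal_eq_sum_range_succ (fun i j => (-1 : ℚ) ^ i * (j.choose i : ℚ)) n
    _ = _ := sum_range_mul_choose_sub_eq_sum_range_div_two _ n
end

section
/- Let K be a field of characteristic zero containing a primitive l-th root of unity q, with l ≥ 1. Then the q-divergence is a cocycle on the Lie algebra of l-divisible tangential derivations: for all u, v ∈ tder_n^{lℕ}, one has u·qdiv(v) - v·qdiv(u) = qdiv([u,v]). -/
/-!
The maps `∂ₖ` of the decomposition `z = ε z + Σₖ (∂ₖ z) xₖ` are forced: they are the upper right
entries of the algebra map `xⱼ ↦ !![xⱼ, δⱼₖ; 0, 0]` into `2 × 2` matrices. Hence they satisfy the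
product rule `∂ₖ (z w) = ε(w) ∂ₖ z + z ∂ₖ w`, which computes `∂ₖ` of `u z` for a tangential
derivation `u`, and `∂ₖ (σ z) = q σ (∂ₖ z)`. With these, the `k`-th term of
`u·qdiv(v) - v·qdiv(u) - qdiv([u,v])` becomes a sum of commutators `z y - y z` with `σ z = z` and
`ε y = 0`. Each such commutator vanishes in `qtr_n`: the relations `xᵢ y ≡ q y xᵢ = y σ(xᵢ)`
propagate by induction on `z` to `z y ≡ y σ(z)` for every `z`.
-/

attribute [local instance 100] LieRing.ofAssociativeRing

lemma AlgHom.eq_zero_of_mem_lieSpan {R A B : Type*} [CommRing R] [Ring A] [Algebra R A]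
    [Ring B] [Algebra R B] (f : A →ₐ[R] B) {s : Set A} (hs : ∀ z ∈ s, f z = 0) {z : A}
    (hz : z ∈ LieSubalgebra.lieSpan R A s) : f z = 0 :=
  LieHom.mem_ker.mp <| LieSubalgebra.lieSpan_le (K := f.toLieHom.ker.toLieSubalgebra).mpr
    (fun y hy => LieHom.mem_ker.mpr (hs y hy)) hz

namespace FreeAlgebra

variable {R X : Type*} [CommRing R]

section Twisted

variable {ε : FreeAlgebra R X →ₐ[R] R} {σ : FreeAlgebra R X →ₐ[R] FreeAlgebra R X}
  {M : Submodule R (FreeAlgebra R X)}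

lemma mul_sub_mul_map_mem (hM : ∀ i y, ε y = 0 → ι R i * y - y * σ (ι R i) ∈ M)
    (z : FreeAlgebra R X) {y : FreeAlgebra R X} (hy : ε y = 0) : z * y - y * σ z ∈ M := by
  induction z using FreeAlgebra.induction generalizing y with
  | grade0 r => simp [Algebra.commutes]
  | grade1 i => exact hM i y hy
  | mul z w hz hw =>
    have h : z * w * y - y * σ (z * w) =
        (z * (w * y) - w * y * σ z) + (w * (y * σ z) - y * σ z * σ w) := by
      rw [map_mul]; noncomm_ring
    rw [h]
    exact add_mem (hz (by simp [hy])) (hw (by simp [hy]))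
  | add z w hz hw =>
    rw [add_mul, map_add, mul_add, add_sub_add_comm]
    exact add_mem (hz hy) (hw hy)

lemma mul_sub_mul_mem_of_map_eq (hM : ∀ i y, ε y = 0 → ι R i * y - y * σ (ι R i) ∈ M)
    {z y : FreeAlgebra R X} (hz : σ z = z) (hy : ε y = 0) : z * y - y * z ∈ M := by
  simpa only [hz] using mul_sub_mul_map_mem hM z hy

end Twisted

variable [DecidableEq X]

/-- The map `z ↦ !![z, ∂ₖ z; 0, ε z]`, where `∂ₖ` is the right partial derivative. -/
noncomputable def rightPartialMatrix (k : X) :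
    FreeAlgebra R X →ₐ[R] Matrix (Fin 2) (Fin 2) (FreeAlgebra R X) :=
  lift R fun j => !![ι R j, if j = k then 1 else 0; 0, 0]

noncomputable def rightPartial (k : X) : FreeAlgebra R X →ₗ[R] FreeAlgebra R X :=
  Matrix.entryLinearMap R _ 0 1 ∘ₗ (rightPartialMatrix k).toLinearMap

lemma rightPartialMatrix_ι (k j : X) :
    rightPartialMatrix k (ι R j) = !![ι R j, if j = k then 1 else 0; 0, 0] :=
  lift_ι_apply _ _

lemma rightPartialMatrix_left_column (k : X) (z : FreeAlgebra R X) :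
    rightPartialMatrix k z 0 0 = z ∧ rightPartialMatrix k z 1 0 = 0 := by
  induction z using FreeAlgebra.induction with
  | grade0 r => simp [rightPartialMatrix, Matrix.algebraMap_matrix_apply]
  | grade1 j => simp [rightPartialMatrix_ι]
  | mul z w hz hw => simp [Matrix.mul_apply, Fin.sum_univ_two, hz, hw]
  | add z w hz hw => simp [hz, hw]

lemma rightPartial_mul_ι (k j : X) (z : FreeAlgebra R X) :
    rightPartial k (z * ι R j) = if j = k then z else 0 := by
  simp [rightPartial, Matrix.mul_apply, Fin.sum_univ_two,
    (rightPartialMatrix_left_column k z).1, rightPartialMatrix_ι]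

lemma rightPartial_algebraMap (k : X) (r : R) :
    rightPartial k (algebraMap R (FreeAlgebra R X) r) = 0 := by
  simp [rightPartial, Matrix.algebraMap_matrix_apply]

variable [Fintype X]

def IsRightDecomposition (ε : FreeAlgebra R X → R)
    (d : X → FreeAlgebra R X →ₗ[R] FreeAlgebra R X) : Prop :=
  ∀ z, z = algebraMap R (FreeAlgebra R X) (ε z) + ∑ k, d k z * ι R k

namespace IsRightDecomposition

variable {d : X → FreeAlgebra R X →ₗ[R] FreeAlgebra R X}

section Function

variable {ε : FreeAlgebra R X → R}

lemma eq_rightPartial (hd : IsRightDecomposition ε d) (k : X) : d k = rightPartial k := by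
  ext z
  conv_rhs => rw [hd z]
  simp [rightPartial_mul_ι, rightPartial_algebraMap]

lemma apply_algebraMap (hd : IsRightDecomposition ε d) (k : X) (r : R) :
    d k (algebraMap R _ r) = 0 := by
  simp [hd.eq_rightPartial, rightPartial_algebraMap]

lemma apply_ι (hd : IsRightDecomposition ε d) (k j : X) :
    d k (ι R j) = if j = k then 1 else 0 := by
  rw [hd.eq_rightPartial, ← one_mul (ι R j), rightPartial_mul_ι]

lemma map_ι (hd : IsRightDecomposition ε d) (j : X) : ε (ι R j) = 0 := by
  simpa [hd.apply_ι] using hd (ι R j)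

end Function

variable {ε : FreeAlgebra R X →ₐ[R] R}

lemma apply_mul (hd : IsRightDecomposition ε d) (k : X) (z w : FreeAlgebra R X) :
    d k (z * w) = ε w • d k z + z * d k w := by
  induction w using FreeAlgebra.induction generalizing z with
  | grade0 r =>
    rw [← Algebra.commutes, ← Algebra.smul_def, map_smul, hd.apply_algebraMap]
    simp
  | grade1 j =>
    rw [hd.apply_ι, hd.map_ι, zero_smul, zero_add, hd.eq_rightPartial, rightPartial_mul_ι]
    simp
  | mul w₁ w₂ h₁ h₂ =>
    rw [← mul_assoc, h₂, h₁, h₂ w₁]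
    simp only [map_mul, mul_add, mul_smul_comm, mul_assoc]
    module
  | add w₁ w₂ h₁ h₂ =>
    simp only [mul_add, map_add, h₁, h₂, add_smul]
    abel

lemma apply_derivation (hd : IsRightDecomposition ε d)
    {W : FreeAlgebra R X →ₗ[R] FreeAlgebra R X} (hW : ∀ z w, W (z * w) = W z * w + z * W w)
    {g : X → FreeAlgebra R X} (hWι : ∀ j, W (ι R j) = ⁅ι R j, g j⁆) (hg : ∀ j, ε (g j) = 0)
    (m : X) (z : FreeAlgebra R X) :
    d m (W z) = W (d m z) + (∑ j, d j z * (ι R j * d m (g j)) - d m z * g m) := by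
  have hW1 : W 1 = 0 := by simpa using hW 1 1
  conv_lhs => rw [hd z]
  simp [hW, hWι, Ring.lie_def, hd.apply_mul, hd.apply_ι, hd.map_ι, hg, hW1,
    Algebra.algebraMap_eq_smul_one, mul_sub, Finset.sum_sub_distrib, Finset.sum_add_distrib]

lemma apply_algHom (hd : IsRightDecomposition ε d) {σ : FreeAlgebra R X →ₐ[R] FreeAlgebra R X}
    {q : R} (hσ : ∀ j, σ (ι R j) = q • ι R j) (m : X) (z : FreeAlgebra R X) :
    d m (σ z) = q • σ (d m z) := by
  conv_lhs => rw [hd z]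
  simp [hσ, hd.apply_mul, hd.apply_ι, hd.map_ι, hd.apply_algebraMap]

lemma map_ι_mul (hd : IsRightDecomposition ε d) {σ : FreeAlgebra R X →ₐ[R] FreeAlgebra R X}
    {q : R} (hσ : ∀ j, σ (ι R j) = q • ι R j) (k m : X) (z : FreeAlgebra R X) :
    σ (ι R k * d m z) = ι R k * d m (σ z) := by
  rw [map_mul, hσ, hd.apply_algHom hσ, smul_mul_assoc, mul_smul_comm]

lemma cocycle_term_eq (hd : IsRightDecomposition ε d)
    {U V : FreeAlgebra R X →ₗ[R] FreeAlgebra R X}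
    (hUder : ∀ z w, U (z * w) = U z * w + z * U w) (hVder : ∀ z w, V (z * w) = V z * w + z * V w)
    {a b : X → FreeAlgebra R X} (hU : ∀ j, U (ι R j) = ⁅ι R j, a j⁆)
    (hV : ∀ j, V (ι R j) = ⁅ι R j, b j⁆) (ha : ∀ j, ε (a j) = 0) (hb : ∀ j, ε (b j) = 0)
    (k : X) :
    U (ι R k * d k (b k)) - V (ι R k * d k (a k)) -
        ι R k * d k (U (b k) - V (a k) + ⁅a k, b k⁆) =
      (ι R k * d k (b k) * a k - a k * (ι R k * d k (b k))) +
      (b k * (ι R k * d k (a k)) - ι R k * d k (a k) * b k) +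
      ∑ j, (ι R k * d j (a k) * (ι R j * d k (b j)) - ι R k * d j (b k) * (ι R j * d k (a j))) := by
  rw [hUder, hVder, hU, hV, map_add, map_sub, hd.apply_derivation hUder hU ha,
    hd.apply_derivation hVder hV hb, Ring.lie_def, Ring.lie_def, Ring.lie_def, map_sub,
    hd.apply_mul, hd.apply_mul, ha, hb]
  simp only [zero_smul, zero_add, mul_add, mul_sub, sub_mul, Finset.mul_sum, mul_assoc,
    Finset.sum_sub_distrib]
  abel

end IsRightDecomposition

end FreeAlgebra

/-- Encoding: `lie_n` is the Lie span of the generators in `FreeAlgebra K (Fin n)`; the weight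
condition `u ∈ tder_n^{lℕ}` is `σ`-invariance for `σ xᵢ = q xᵢ`; `d k` is `∂ₖ`; `U`, `V` act as
`u = (a_k)`, `v = (b_k)`; `c = [u, v]`; and equality in `qtr_n` is congruence modulo `Rel`. -/
theorem qdiv_is_cocycle_general (K : Type*) [Field K]
    (q : K)
    (n : ℕ) (x : Fin n → FreeAlgebra K (Fin n)) (hx : ∀ i, x i = FreeAlgebra.ι K i)
    (σ : FreeAlgebra K (Fin n) →ₐ[K] FreeAlgebra K (Fin n))
    (hσ : ∀ i, σ (x i) = q • x i)
    (ε : FreeAlgebra K (Fin n) →ₐ[K] K)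
    (d : Fin n → (FreeAlgebra K (Fin n) →ₗ[K] FreeAlgebra K (Fin n)))
    (hd : ∀ z : FreeAlgebra K (Fin n),
      z = algebraMap K (FreeAlgebra K (Fin n)) (ε z) + ∑ k, d k z * x k)
    (a b : Fin n → FreeAlgebra K (Fin n))
    (haLie : ∀ k, a k ∈
      LieSubalgebra.lieSpan K (FreeAlgebra K (Fin n)) (Set.range (FreeAlgebra.ι K)))
    (hbLie : ∀ k, b k ∈
      LieSubalgebra.lieSpan K (FreeAlgebra K (Fin n)) (Set.range (FreeAlgebra.ι K)))
    (haW : ∀ k, σ (a k) = a k) (hbW : ∀ k, σ (b k) = b k)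
    (U V : FreeAlgebra K (Fin n) →ₗ[K] FreeAlgebra K (Fin n))
    (hUder : ∀ z w, U (z * w) = U z * w + z * U w)
    (hVder : ∀ z w, V (z * w) = V z * w + z * V w)
    (hU : ∀ k, U (x k) = ⁅x k, a k⁆) (hV : ∀ k, V (x k) = ⁅x k, b k⁆)
    (c : Fin n → FreeAlgebra K (Fin n))
    (hc : ∀ k, c k = U (b k) - V (a k) + ⁅a k, b k⁆)
    (Rel : Submodule K (FreeAlgebra K (Fin n)))
    (hRel : Rel = Submodule.span K
      {z | ∃ i : Fin n, ∃ y : FreeAlgebra K (Fin n), ε y = 0 ∧ z = x i * y - q • (y * x i)}) :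
    U (∑ k, x k * d k (b k)) - V (∑ k, x k * d k (a k)) - ∑ k, x k * d k (c k) ∈ Rel := by
  obtain rfl : x = FreeAlgebra.ι K := funext hx
  replace hd : FreeAlgebra.IsRightDecomposition ε d := hd
  have hει_mul (k : Fin n) (y : FreeAlgebra K (Fin n)) : ε (FreeAlgebra.ι K k * y) = 0 := by
    rw [map_mul, hd.map_ι, zero_mul]
  have hεLie {z} (hz : z ∈ LieSubalgebra.lieSpan K _ (Set.range (FreeAlgebra.ι K))) : ε z = 0 :=
    ε.eq_zero_of_mem_lieSpan (by rintro _ ⟨i, rfl⟩; exact hd.map_ι i) hz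
  have hcomm {z y : FreeAlgebra K (Fin n)} (hz : σ z = z) (hy : ε y = 0) : z * y - y * z ∈ Rel :=
    FreeAlgebra.mul_sub_mul_mem_of_map_eq (fun i y hy => by
      rw [hRel, hσ, mul_smul_comm]; exact Submodule.subset_span ⟨i, y, hy, rfl⟩) hz hy
  simp only [hc, map_sum, ← Finset.sum_sub_distrib, Finset.sum_add_distrib,
    hd.cocycle_term_eq hUder hVder hU hV (fun k => hεLie (haLie k)) (fun k => hεLie (hbLie k))]
  refine add_mem (add_mem (sum_mem fun k _ => ?_) (sum_mem fun k _ => ?_)) ?_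
  · rw [← neg_sub]
    exact neg_mem (hcomm (haW k) (hει_mul _ _))
  · exact hcomm (hbW k) (hει_mul _ _)
  · simp only [Finset.sum_sub_distrib]
    -- swapping `j` and `k` in the subtracted double sum pairs its terms with commutators
    nth_rw 2 [Finset.sum_comm]
    simp only [← Finset.sum_sub_distrib]
    refine sum_mem fun k _ => sum_mem fun j _ => hcomm ?_ (hει_mul _ _)
    rw [hd.map_ι_mul hσ, haW]

/-- The `q`-divergence is a cocycle on the Lie algebra `tder_n^{lℕ}` of tangential
derivations whose components have weight divisible by `l`:
`u·qdiv(v) - v·qdiv(u) = qdiv([u,v])` in the `q`-trace space `qtr_n`.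

Here the free Lie algebra `lie_n` sits inside the free associative algebra
`A = FreeAlgebra K (Fin n)` as the Lie subalgebra generated by the generators `x_i`;
`σ` is the algebra endomorphism `x_i ↦ q·x_i`, whose fixed points are exactly the sums
of homogeneous elements of weight divisible by `l` (for `q` a primitive `l`-th root of
unity in characteristic zero); `ε` is the augmentation; `d k` are the decomposition
maps `z = ε(z) + Σ_k (∂_k z)·x_k`; `U`, `V` are the tangential derivations determined
by `a`, `b`; and equality in `qtr_n` is membership of the difference in the span `Rel`
of the relations `x_i·y - q·(y·x_i)` for `y` in the augmentation ideal. -/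
theorem qdiv_is_cocycle (K : Type*) [Field K] [CharZero K]
    (l : ℕ) (hl : 1 ≤ l) (q : K) (hq : IsPrimitiveRoot q l)
    (n : ℕ) (x : Fin n → FreeAlgebra K (Fin n)) (hx : ∀ i, x i = FreeAlgebra.ι K i)
    (σ : FreeAlgebra K (Fin n) →ₐ[K] FreeAlgebra K (Fin n))
    (hσ : ∀ i, σ (x i) = q • x i)
    (ε : FreeAlgebra K (Fin n) →ₐ[K] K) (hε : ∀ i, ε (x i) = 0)
    (d : Fin n → (FreeAlgebra K (Fin n) →ₗ[K] FreeAlgebra K (Fin n)))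
    (hd : ∀ z : FreeAlgebra K (Fin n),
      z = algebraMap K (FreeAlgebra K (Fin n)) (ε z) + ∑ k, d k z * x k)
    (a b : Fin n → FreeAlgebra K (Fin n))
    (haLie : ∀ k, a k ∈
      LieSubalgebra.lieSpan K (FreeAlgebra K (Fin n)) (Set.range (FreeAlgebra.ι K)))
    (hbLie : ∀ k, b k ∈
      LieSubalgebra.lieSpan K (FreeAlgebra K (Fin n)) (Set.range (FreeAlgebra.ι K)))
    (haW : ∀ k, σ (a k) = a k) (hbW : ∀ k, σ (b k) = b k)
    (U V : FreeAlgebra K (Fin n) →ₗ[K] FreeAlgebra K (Fin n))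
    (hUder : ∀ z w, U (z * w) = U z * w + z * U w)
    (hVder : ∀ z w, V (z * w) = V z * w + z * V w)
    (hU : ∀ k, U (x k) = ⁅x k, a k⁆) (hV : ∀ k, V (x k) = ⁅x k, b k⁆)
    (c : Fin n → FreeAlgebra K (Fin n))
    (hc : ∀ k, c k = U (b k) - V (a k) + ⁅a k, b k⁆)
    (Rel : Submodule K (FreeAlgebra K (Fin n)))
    (hRel : Rel = Submodule.span K
      {z | ∃ i : Fin n, ∃ y : FreeAlgebra K (Fin n), ε y = 0 ∧ z = x i * y - q • (y * x i)}) :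
    U (∑ k, x k * d k (b k)) - V (∑ k, x k * d k (a k)) - ∑ k, x k * d k (c k) ∈ Rel :=
  qdiv_is_cocycle_general K q n x hx σ hσ ε d hd a b haLie hbLie haW hbW U V hUder hVder hU hV c hc
    Rel hRel
end
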